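/- Let U, Z be random variables, each taking finitely many values on a common finite probability space, and let E be an event with Pr[E] = p > 0. Then I(U;Z) ≥ p·I_{|E}(U;Z) − p·log₂(4/p), where I_{|E}(U;Z) denotes the mutual information of U and Z computed under the conditional probability measure given E. -/

import Mathlib

/-
Let `W = 1_E`. Since `H(U,Z) ≤ H(U,Z,W)`, `H(U) ≥ H(U|W)` and `H(Z) ≥ H(Z|W)`, we get
`I(U;Z) ≥ I(U;Z|W) - H(W)`. The `W = 1` part of `I(U;Z|W)` is `p·I_{|E}(U;Z)` and the other part
is nonnegative, while `H(W) = -p log p - (1-p) log (1-p) ≤ p log (1/p) + 2p = p log (4/p)`.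

Entropies are taken with respect to unnormalised nonnegative weights, so that conditioning on
`W = w` is just restricting the weight to `{W = w}`; normalising a weight of total mass `N`
shifts its entropies by `N log N`.
-/

open scoped Classical
open Finset

/-- Probability of an event `E` under a weight function `p` on a finite sample space. -/
noncomputable def prEv {Ω : Type*} [Fintype Ω] (p : Ω → ℝ) (E : Ω → Prop) : ℝ :=
  ∑ ω, if E ω then p ω else 0

/-- Shannon entropy (base 2) of a random variable `X` on a finite probability space,
with the convention `0 · log₂ 0 = 0` (automatic since `Real.logb 2 0 = 0`). -/
noncomputable def ent {Ω S : Type*} [Fintype Ω] [Fintype S] (p : Ω → ℝ) (X : Ω → S) : ℝ :=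
  -∑ s : S, prEv p (fun ω => X ω = s) * Real.logb 2 (prEv p (fun ω => X ω = s))

/-- Conditional Shannon entropy `H(X|Y)` (base 2). -/
noncomputable def condEnt {Ω S T : Type*} [Fintype Ω] [Fintype S] [Fintype T]
    (p : Ω → ℝ) (X : Ω → S) (Y : Ω → T) : ℝ :=
  -∑ s : S, ∑ t : T, prEv p (fun ω => X ω = s ∧ Y ω = t) *
      Real.logb 2 (prEv p (fun ω => X ω = s ∧ Y ω = t) / prEv p (fun ω => Y ω = t))

/-- Mutual information `I(X;Y) = H(X) - H(X|Y)`. -/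
noncomputable def mi {Ω S T : Type*} [Fintype Ω] [Fintype S] [Fintype T]
    (p : Ω → ℝ) (X : Ω → S) (Y : Ω → T) : ℝ :=
  ent p X - condEnt p X Y

/-- Conditional mutual information `I(X;Y|Z) = H(X|Z) - H(X|(Y,Z))`. -/
noncomputable def cmi {Ω S T U : Type*} [Fintype Ω] [Fintype S] [Fintype T] [Fintype U]
    (p : Ω → ℝ) (X : Ω → S) (Y : Ω → T) (Z : Ω → U) : ℝ :=
  condEnt p X Z - condEnt p X (fun ω => (Y ω, Z ω))

open Real

lemma mul_logb_le_mul_logb {x y : ℝ} (hx : 0 ≤ x) (hxy : x ≤ y) :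
    x * logb 2 x ≤ x * logb 2 y := by
  rcases hx.eq_or_lt with rfl | hx
  · simp
  · exact mul_le_mul_of_nonneg_left (logb_le_logb_of_le one_lt_two hx hxy) hx.le

lemma mul_logb_div_of_le {x y : ℝ} (hx : 0 ≤ x) (hxy : x ≤ y) :
    x * logb 2 (x / y) = x * logb 2 x - x * logb 2 y := by
  rcases hx.eq_or_lt with rfl | hx
  · simp
  · rw [logb_div hx.ne' (hx.trans_le hxy).ne']; ring

lemma mul_logb_mul_div_of_le {x a b n : ℝ} (hx : 0 ≤ x) (ha : x ≤ a) (hb : x ≤ b) (hn : x ≤ n) :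
    x * logb 2 (a * b / n) = x * logb 2 a + x * logb 2 b - x * logb 2 n := by
  rcases hx.eq_or_lt with rfl | hx
  · simp
  · rw [logb_div (mul_pos (hx.trans_le ha) (hx.trans_le hb)).ne' (hx.trans_le hn).ne',
      logb_mul (hx.trans_le ha).ne' (hx.trans_le hb).ne']
    ring

lemma mul_mul_logb_mul (x y : ℝ) :
    x * y * logb 2 (x * y) = y * (x * logb 2 x) + x * (y * logb 2 y) := by
  rcases eq_or_ne x 0 with rfl | hx
  · simp
  rcases eq_or_ne y 0 with rfl | hy
  · simp
  rw [logb_mul hx hy]; ring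

lemma mul_logb_sub_mul_logb_le {x y : ℝ} (hx : 0 ≤ x) (hy : 0 ≤ y) (hxy : x ≠ 0 → y ≠ 0) :
    x * logb 2 y - x * logb 2 x ≤ (y - x) / log 2 := by
  rcases hx.eq_or_lt with rfl | hx
  · simpa using div_nonneg hy (log_nonneg one_le_two)
  have hy : 0 < y := hy.lt_of_ne (hxy hx.ne').symm
  have hlog : x * log (y / x) ≤ y - x := calc
    x * log (y / x) ≤ x * (y / x - 1) :=
      mul_le_mul_of_nonneg_left (log_le_sub_one_of_pos (div_pos hy hx)) hx.le
    _ = y - x := by field_simp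
  have hlogb : x * logb 2 y - x * logb 2 x = x * log (y / x) / log 2 := by
    rw [log_div hy.ne' hx.ne', logb, logb]; ring
  rw [hlogb]
  exact div_le_div_of_nonneg_right hlog (log_nonneg one_le_two)

lemma sum_mul_logb_le_sum_mul_logb {ι : Type*} [Fintype ι] (x y : ι → ℝ) (hx : ∀ i, 0 ≤ x i)
    (hy : ∀ i, 0 ≤ y i) (hxy : ∀ i, x i ≠ 0 → y i ≠ 0) (hsum : ∑ i, y i ≤ ∑ i, x i) :
    ∑ i, x i * logb 2 (y i) ≤ ∑ i, x i * logb 2 (x i) := by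
  have key := Finset.sum_le_sum fun i (_ : i ∈ Finset.univ) =>
    mul_logb_sub_mul_logb_le (hx i) (hy i) (hxy i)
  rw [Finset.sum_sub_distrib, ← Finset.sum_div, Finset.sum_sub_distrib] at key
  have : (∑ i, y i - ∑ i, x i) / log 2 ≤ 0 :=
    div_nonpos_of_nonpos_of_nonneg (by linarith) (log_nonneg one_le_two)
  linarith

section Matrix

variable {ι κ : Type*} [Fintype ι] [Fintype κ] {f : ι → κ → ℝ}

lemma sum_sum_mul_logb_le_sum_mul_logb_sum (hf : ∀ i k, 0 ≤ f i k) :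
    ∑ i, ∑ k, f i k * logb 2 (f i k) ≤ ∑ i, (∑ k, f i k) * logb 2 (∑ k, f i k) := by
  refine Finset.sum_le_sum fun i _ => ?_
  rw [Finset.sum_mul]
  exact Finset.sum_le_sum fun k _ => mul_logb_le_mul_logb (hf i k)
    (Finset.single_le_sum (fun k _ => hf i k) (Finset.mem_univ k))

lemma sum_mul_logb_sum_add_sum_mul_logb_sum_le (hf : ∀ i k, 0 ≤ f i k) :
    ∑ i, (∑ k, f i k) * logb 2 (∑ k, f i k) + ∑ k, (∑ i, f i k) * logb 2 (∑ i, f i k) ≤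
      ∑ i, ∑ k, f i k * logb 2 (f i k) + (∑ i, ∑ k, f i k) * logb 2 (∑ i, ∑ k, f i k) := by
  set r := fun i => ∑ k, f i k
  set c := fun k => ∑ i, f i k
  set N := ∑ i, ∑ k, f i k
  have hr : ∀ i k, f i k ≤ r i := fun i k =>
    Finset.single_le_sum (fun k _ => hf i k) (Finset.mem_univ k)
  have hc : ∀ i k, f i k ≤ c k := fun i k =>
    Finset.single_le_sum (f := fun i => f i k) (fun i _ => hf i k) (Finset.mem_univ i)
  have hN : ∀ i k, f i k ≤ N := fun i k => (hr i k).trans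
    (Finset.single_le_sum (f := r) (fun i _ => Finset.sum_nonneg fun k _ => hf i k)
      (Finset.mem_univ i))
  have hcN : ∑ k, c k = N := Finset.sum_comm
  -- Gibbs' inequality against the product of the marginals.
  have gibbs := sum_mul_logb_le_sum_mul_logb (fun q : ι × κ => f q.1 q.2)
    (fun q => r q.1 * c q.2 / N) (fun q => hf q.1 q.2)
    (fun q => div_nonneg (mul_nonneg ((hf _ _).trans (hr q.1 q.2)) ((hf _ _).trans (hc q.1 q.2)))
      ((hf _ _).trans (hN q.1 q.2)))
    (fun q hq => by
      have h := (hf q.1 q.2).lt_of_ne' hq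
      exact (div_pos (mul_pos (h.trans_le (hr _ _)) (h.trans_le (hc _ _)))
        (h.trans_le (hN _ _))).ne')
    (by
      simp only [Fintype.sum_prod_type, ← Finset.sum_div, ← Finset.mul_sum, ← Finset.sum_mul, hcN]
      exact (mul_self_div_self N).le)
  simp only [Fintype.sum_prod_type] at gibbs
  have expand : ∑ i, ∑ k, f i k * logb 2 (r i * c k / N) =
      ∑ i, r i * logb 2 (r i) + ∑ k, c k * logb 2 (c k) - N * logb 2 N := by
    simp only [fun i k => mul_logb_mul_div_of_le (hf i k) (hr i k) (hc i k) (hN i k),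
      Finset.sum_sub_distrib, Finset.sum_add_distrib, ← Finset.sum_mul]
    rw [Finset.sum_comm (f := fun i k => f i k * logb 2 (c k))]
    simp only [← Finset.sum_mul]
    rfl
  linarith

end Matrix

lemma neg_two_mul_le_mul_logb {y : ℝ} (hy : 0 ≤ y) (hy1 : y ≤ 1) :
    -2 * (1 - y) ≤ y * logb 2 y := by
  have hlog2 := log_two_gt_d9
  have h : y - 1 ≤ y * log y := self_sub_one_le_mul_log hy
  rw [logb, ← mul_div_assoc, le_div_iff₀ (by linarith)]
  nlinarith

noncomputable def restrictEv {Ω : Type*} (p : Ω → ℝ) (E : Ω → Prop) : Ω → ℝ :=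
  fun ω => if E ω then p ω else 0

lemma restrictEv_nonneg {Ω : Type*} {p : Ω → ℝ} (hp : ∀ ω, 0 ≤ p ω) (E : Ω → Prop) (ω : Ω) :
    0 ≤ restrictEv p E ω := by
  unfold restrictEv; split_ifs <;> simp [hp ω]

section Entropy

variable {Ω S T V : Type*} [Fintype Ω] [Fintype S] [Fintype T] [Fintype V] {p : Ω → ℝ}

lemma prEv_nonneg (hp : ∀ ω, 0 ≤ p ω) (P : Ω → Prop) : 0 ≤ prEv p P :=
  Finset.sum_nonneg fun ω _ => by split_ifs <;> simp [hp ω]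

lemma prEv_mono (hp : ∀ ω, 0 ≤ p ω) {P Q : Ω → Prop} (h : ∀ ω, P ω → Q ω) :
    prEv p P ≤ prEv p Q :=
  Finset.sum_le_sum fun ω _ => by
    by_cases hP : P ω
    · simp [hP, h ω hP]
    · split_ifs <;> simp [hp ω]

lemma sum_prEv_and_eq (P : Ω → Prop) (X : Ω → S) :
    ∑ s, prEv p (fun ω => P ω ∧ X ω = s) = prEv p P := by
  unfold prEv
  rw [Finset.sum_comm]
  refine Finset.sum_congr rfl fun ω _ => ?_
  by_cases hP : P ω <;> simp [hP]

lemma sum_prEv_eq_and (P : Ω → Prop) (X : Ω → S) :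
    ∑ s, prEv p (fun ω => X ω = s ∧ P ω) = prEv p P := by
  simp only [and_comm (a := X _ = _), sum_prEv_and_eq]

lemma sum_prEv_eq (X : Ω → S) : ∑ s, prEv p (fun ω => X ω = s) = ∑ ω, p ω := by
  simpa [prEv] using sum_prEv_eq_and (p := p) (fun _ => True) X

lemma sum_restrictEv (E : Ω → Prop) : ∑ ω, restrictEv p E ω = prEv p E := rfl

lemma prEv_restrictEv (E P : Ω → Prop) :
    prEv (restrictEv p E) P = prEv p (fun ω => P ω ∧ E ω) := by
  refine Finset.sum_congr rfl fun ω _ => ?_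
  by_cases hP : P ω <;> simp [restrictEv, hP]

lemma prEv_const_mul (c : ℝ) (P : Ω → Prop) :
    prEv (fun ω => c * p ω) P = c * prEv p P := by
  simp only [prEv, Finset.mul_sum, mul_ite, mul_zero]

lemma ent_pair (X : Ω → S) (Y : Ω → T) :
    ent p (fun ω => (X ω, Y ω)) = -∑ s, ∑ t, prEv p (fun ω => X ω = s ∧ Y ω = t) *
      logb 2 (prEv p (fun ω => X ω = s ∧ Y ω = t)) := by
  simp only [ent, Fintype.sum_prod_type, Prod.mk.injEq]

lemma condEnt_eq_ent_pair_sub_ent (hp : ∀ ω, 0 ≤ p ω) (X : Ω → S) (Y : Ω → T) :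
    condEnt p X Y = ent p (fun ω => (X ω, Y ω)) - ent p Y := by
  have hle : ∀ s t, prEv p (fun ω => X ω = s ∧ Y ω = t) ≤ prEv p (fun ω => Y ω = t) :=
    fun s t => prEv_mono hp fun ω h => h.2
  rw [ent_pair]
  simp only [condEnt, ent, fun s t => mul_logb_div_of_le (prEv_nonneg hp _) (hle s t),
    Finset.sum_sub_distrib]
  rw [Finset.sum_comm (f := fun s t => prEv p (fun ω => X ω = s ∧ Y ω = t) *
    logb 2 (prEv p (fun ω => Y ω = t)))]
  simp only [← Finset.sum_mul, sum_prEv_eq_and]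
  ring

lemma mi_eq_ent_add_ent_sub_ent_pair (hp : ∀ ω, 0 ≤ p ω) (X : Ω → S) (Y : Ω → T) :
    mi p X Y = ent p X + ent p Y - ent p (fun ω => (X ω, Y ω)) := by
  rw [mi, condEnt_eq_ent_pair_sub_ent hp]; ring

lemma ent_le_ent_pair (hp : ∀ ω, 0 ≤ p ω) (X : Ω → S) (Y : Ω → T) :
    ent p X ≤ ent p (fun ω => (X ω, Y ω)) := by
  have h := sum_sum_mul_logb_le_sum_mul_logb_sum fun s t =>
    prEv_nonneg hp fun ω => X ω = s ∧ Y ω = t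
  simp only [sum_prEv_and_eq] at h
  rw [ent_pair, ent]
  linarith

lemma ent_pair_le_ent_add_ent (hp : ∀ ω, 0 ≤ p ω) (X : Ω → S) (Y : Ω → T) :
    ent p (fun ω => (X ω, Y ω)) ≤ ent p X + ent p Y + (∑ ω, p ω) * logb 2 (∑ ω, p ω) := by
  have h := sum_mul_logb_sum_add_sum_mul_logb_sum_le fun s t =>
    prEv_nonneg hp fun ω => X ω = s ∧ Y ω = t
  simp only [sum_prEv_and_eq, sum_prEv_eq_and, sum_prEv_eq] at h
  rw [ent_pair, ent, ent]
  linarith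

lemma ent_pair_eq_sum_ent_restrictEv (X : Ω → S) (W : Ω → V) :
    ent p (fun ω => (X ω, W ω)) = ∑ w, ent (restrictEv p fun ω => W ω = w) X := by
  rw [ent_pair]
  simp only [ent, prEv_restrictEv, ← Finset.sum_neg_distrib]
  exact Finset.sum_comm

lemma ent_const_mul (c : ℝ) (X : Ω → S) :
    ent (fun ω => c * p ω) X = c * ent p X - c * (∑ ω, p ω) * logb 2 c := by
  simp only [ent, prEv_const_mul, mul_mul_logb_mul, Finset.sum_add_distrib, ← Finset.mul_sum,
    ← Finset.sum_mul, sum_prEv_eq]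
  ring

lemma mi_const_mul (hp : ∀ ω, 0 ≤ p ω) {c : ℝ} (hc : 0 ≤ c) (X : Ω → S) (Y : Ω → T) :
    mi (fun ω => c * p ω) X Y = c * mi p X Y - c * (∑ ω, p ω) * logb 2 c := by
  simp only [mi_eq_ent_add_ent_sub_ent_pair hp, mi_eq_ent_add_ent_sub_ent_pair
    (fun ω => mul_nonneg hc (hp ω)), ent_const_mul]
  ring

lemma mi_add_mul_logb_nonneg (hp : ∀ ω, 0 ≤ p ω) (X : Ω → S) (Y : Ω → T) :
    0 ≤ mi p X Y + (∑ ω, p ω) * logb 2 (∑ ω, p ω) := by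
  rw [mi_eq_ent_add_ent_sub_ent_pair hp]
  linarith [ent_pair_le_ent_add_ent hp X Y]

/-- `I(X;Y) ≥ I(X;Y|W) - H(W)`, written with the unnormalised `mi` of the restrictions: the
`N_w log N_w` terms of `I(X;Y|W)` add up to `-H(W)`. -/
lemma sum_mi_restrictEv_sub_le_mi (hp : ∀ ω, 0 ≤ p ω) (hsum : ∑ ω, p ω = 1)
    (X : Ω → S) (Y : Ω → T) (W : Ω → V) :
    ∑ w, mi (restrictEv p fun ω => W ω = w) X Y - 2 * ent p W ≤ mi p X Y := by
  have hXY : ent p (fun ω => (X ω, Y ω)) ≤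
      ∑ w, ent (restrictEv p fun ω => W ω = w) (fun ω => (X ω, Y ω)) :=
    (ent_le_ent_pair hp _ W).trans_eq (ent_pair_eq_sum_ent_restrictEv _ W)
  have hX : ∑ w, ent (restrictEv p fun ω => W ω = w) X ≤ ent p X + ent p W := by
    simpa [hsum, ← ent_pair_eq_sum_ent_restrictEv] using ent_pair_le_ent_add_ent hp X W
  have hY : ∑ w, ent (restrictEv p fun ω => W ω = w) Y ≤ ent p Y + ent p W := by
    simpa [hsum, ← ent_pair_eq_sum_ent_restrictEv] using ent_pair_le_ent_add_ent hp Y W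
  simp only [mi_eq_ent_add_ent_sub_ent_pair (restrictEv_nonneg hp _),
    mi_eq_ent_add_ent_sub_ent_pair hp, Finset.sum_sub_distrib, Finset.sum_add_distrib]
  linarith

end Entropy

/-- For an event `E` with `Pr[E] = p > 0`,
`I(U;Z) ≥ p·I_{|E}(U;Z) − p·log₂(4/p)`, where `I_{|E}` is the mutual
information computed under the conditional measure given `E`. -/
theorem mutualInfo_ge_conditional
    {Ω S T : Type*} [Fintype Ω] [Fintype S] [Fintype T]
    (p : Ω → ℝ) (hp : ∀ ω, 0 ≤ p ω) (hsum : ∑ ω, p ω = 1)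
    (U : Ω → S) (Z : Ω → T) (E : Ω → Prop) (pE : ℝ)
    (hE : prEv p E = pE) (hpos : 0 < pE) :
    mi p U Z ≥
      pE * mi (fun ω => if E ω then p ω / pE else 0) U Z - pE * Real.logb 2 (4 / pE) := by
  set W : Ω → Bool := fun ω => decide (E ω)
  set pF := prEv p fun ω => W ω = false
  have hmass_true : prEv p (fun ω => W ω = true) = pE := by simpa [W] using hE
  have hmass : pE + pF = 1 := by
    rw [← hmass_true, ← hsum, ← sum_prEv_eq W, Fintype.sum_bool]
  have hcond : pE * mi (fun ω => if E ω then p ω / pE else 0) U Z =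
      mi (restrictEv p fun ω => W ω = true) U Z + pE * logb 2 pE := by
    have hq : (fun ω => if E ω then p ω / pE else 0) =
        fun ω => pE⁻¹ * restrictEv p (fun ω => W ω = true) ω := by
      funext ω; by_cases h : E ω <;> simp [restrictEv, W, h, div_eq_inv_mul]
    rw [hq, mi_const_mul (restrictEv_nonneg hp _) (inv_nonneg.2 hpos.le), sum_restrictEv,
      hmass_true, logb_inv]
    field_simp
    ring
  have hF := mi_add_mul_logb_nonneg (restrictEv_nonneg hp fun ω => W ω = false) U Z
  rw [sum_restrictEv] at hF
  have hW : ent p W = -(pE * logb 2 pE + pF * logb 2 pF) := by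
    rw [ent, Fintype.sum_bool, hmass_true]
  have hbin := neg_two_mul_le_mul_logb (prEv_nonneg hp _) (by linarith : pF ≤ 1)
  have h4 : pE * logb 2 (4 / pE) = 2 * pE - pE * logb 2 pE := by
    rw [logb_div (by norm_num) hpos.ne', show (4 : ℝ) = 2 ^ 2 by norm_num, logb_pow,
      logb_self_eq_one one_lt_two]
    ring
  have key := sum_mi_restrictEv_sub_le_mi hp hsum U Z W
  rw [Fintype.sum_bool] at key
  rw [ge_iff_le, hcond, h4]
  linarith
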